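/- arXiv:2604.19044 — 2 statements merged into one kernel-verified Lean document; each statement's English description precedes it below -/
import Mathlib

section
/- Let F₁ and F₂ be cumulative distribution functions of Borel probability measures supported on [a₁,b₁] and [a₂,b₂] respectively, with left-continuous quantile functions q₁, q₂. Let A be the pushforward of the Lebesgue measure on [0,1] under the map u ↦ (q₁(u), q₂(1−u)) (the antitone coupling). Then: (i) A has marginal distributions F₁ and F₂; (ii) the joint CDF of A is (x,y) ↦ max(F₁(x) + F₂(y) − 1, 0); and (iii) every Borel probability measure μ on [a₁,b₁] × [a₂,b₂] with marginals F₁ and F₂ satisfies ∫ h dμ ≥ ∫ h dA for every bounded measurable supermodular h, i.e. the antitone coupling is minimal in the supermodular order among all couplings of (F₁, F₂). -/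
/-!
For `0 < u < 1` the quantile function is a Galois inverse of the CDF:
`quantile μ u ≤ x ↔ u ≤ cdf μ x`. Hence the set of `u ∈ (0, 1)` with
`(q₁ u, q₂ (1 - u)) ≤ (x, y)` is the interval `[1 - F₂ y, F₁ x]`, which gives the marginals and
the joint CDF `max (F₁ x + F₂ y - 1) 0`; by the Fréchet bound
`μ (Iic (x, y)) ≥ F₁ x + F₂ y - 1` this is the smallest joint CDF of any coupling.

For the supermodular order, subtract from `h` its values on the upper edges of the box
`[a₁, b₁] × [a₂, b₂]`: the result `H` has nonnegative rectangle increments and vanishes on those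
edges. After rounding both coordinates up to finite grids, summation by parts writes `H` as a
nonnegative combination of indicators of lower orthants `Iic p`, so its integrals are ordered like
the joint CDFs. If the grids eventually contain every discontinuity of the monotone edge functions
`H (·, a₂)` and `H (a₁, ·)` (there are countably many), these step functions converge to `H` on the
whole box, and dominated convergence concludes.
-/

open MeasureTheory ProbabilityTheory Set Filter Topology

noncomputable def gridCeil (b : ℝ) (G : Finset ℝ) (x : ℝ) : ℝ :=
  (insert b {g ∈ G | x ≤ g}).min' (Finset.insert_nonempty _ _)

noncomputable def gridSucc (b : ℝ) (G : Finset ℝ) (g : ℝ) : ℝ := gridCeil b {g' ∈ G | g < g'} g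

section Grid

variable {b x g : ℝ} {G : Finset ℝ}

theorem gridCeil_le_right : gridCeil b G x ≤ b :=
  Finset.min'_le _ _ (Finset.mem_insert_self _ _)

theorem gridCeil_le (hg : g ∈ G) (hxg : x ≤ g) : gridCeil b G x ≤ g :=
  Finset.min'_le _ _ (Finset.mem_insert_of_mem (Finset.mem_filter.2 ⟨hg, hxg⟩))

theorem le_gridCeil (hxb : x ≤ b) : x ≤ gridCeil b G x :=
  Finset.le_min' _ _ _ fun y hy => by
    rcases Finset.mem_insert.1 hy with rfl | hy
    exacts [hxb, (Finset.mem_filter.1 hy).2]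

theorem gridCeil_mem : gridCeil b G x ∈ insert b G := by
  have := Finset.min'_mem (insert b {g ∈ G | x ≤ g}) (Finset.insert_nonempty _ _)
  simp only [Finset.mem_insert, Finset.mem_filter] at this ⊢
  exact this.imp_right And.left

theorem gridCeil_eq_self (hx : x ∈ G) (hxb : x ≤ b) : gridCeil b G x = x :=
  (gridCeil_le hx le_rfl).antisymm (le_gridCeil hxb)

theorem monotone_gridCeil : Monotone (gridCeil b G) := fun _ _ hxy =>
  Finset.min'_subset _ (Finset.insert_subset_insert _ fun _ hg => by
    simp only [Finset.mem_filter] at hg ⊢; exact ⟨hg.1, hxy.trans hg.2⟩)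

theorem gridCeil_mem_Icc {a : ℝ} (hG : ∀ g ∈ G, g ∈ Icc a b) (hx : x ∈ Icc a b) :
    gridCeil b G x ∈ Icc a b := by
  rcases Finset.mem_insert.1 (gridCeil_mem (b := b) (G := G) (x := x)) with h | h
  · rw [h]; exact right_mem_Icc.2 (hx.1.trans hx.2)
  · exact hG _ h

theorem gridCeil_congr {G' : Finset ℝ} {x' : ℝ} (h : ∀ g, g ∈ G ∧ x ≤ g ↔ g ∈ G' ∧ x' ≤ g) :
    gridCeil b G x = gridCeil b G' x' := by
  unfold gridCeil; congr 2; ext g; simp only [Finset.mem_filter, h]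

theorem le_gridSucc (hg : g ≤ b) : g ≤ gridSucc b G g := le_gridCeil hg

theorem gridSucc_mem_Icc {a : ℝ} (hG : ∀ g ∈ G, g ∈ Icc a b) (hg : g ∈ Icc a b) :
    gridSucc b G g ∈ Icc a b :=
  gridCeil_mem_Icc (fun _ hg' => hG _ (Finset.mem_filter.1 hg').1) hg

theorem sum_ite_gridSucc_sub {M : Type*} [AddCommGroup M] (f : ℝ → M) (hG : ∀ g ∈ G, g ≤ b)
    (x : ℝ) :
    ∑ g ∈ G, (if x ≤ g then f (gridSucc b G g) - f g else 0) = f b - f (gridCeil b G x) := by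
  classical
  induction G using Finset.induction_on_min generalizing x with
  | empty => simp [gridCeil]
  | insert m s hm ih =>
    have hms : m ∉ s := fun h => lt_irrefl m (hm m h)
    have hsb : ∀ g ∈ s, g ≤ b := fun g hg => hG g (Finset.mem_insert_of_mem hg)
    have hmb : m ≤ b := hG m (Finset.mem_insert_self m s)
    have hsucc : ∀ g ∈ s, gridSucc b (insert m s) g = gridSucc b s g := fun g hg =>
      gridCeil_congr fun g' => by simp only [Finset.mem_filter, Finset.mem_insert]; grind
    rw [Finset.sum_insert hms, Finset.sum_congr rfl fun g hg => by rw [hsucc g hg], ih hsb]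
    by_cases hxm : x ≤ m
    · have hsucc_m : gridSucc b (insert m s) m = gridCeil b s x :=
        gridCeil_congr fun g' => by simp only [Finset.mem_filter, Finset.mem_insert]; grind
      have hceil : gridCeil b (insert m s) x = m :=
        (gridCeil_le (Finset.mem_insert_self m s) hxm).antisymm <|
          Finset.le_min' _ _ _ fun y hy => by
            simp only [Finset.mem_insert, Finset.mem_filter] at hy; grind
      rw [if_pos hxm, hsucc_m, hceil]; abel
    · have hceil : gridCeil b (insert m s) x = gridCeil b s x :=
        gridCeil_congr fun g' => by simp only [Finset.mem_insert]; grind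
      rw [if_neg hxm, hceil, zero_add]

end Grid

theorem exists_gridCeil_tendsto (a b : ℝ) {D : Set ℝ} (hD : D.Countable) :
    ∃ G : ℕ → Finset ℝ, (∀ n, ∀ g ∈ G n, g ∈ Icc a b) ∧ ∀ x ∈ Icc a b,
      Tendsto (fun n => gridCeil b (G n) x) atTop (𝓝 x) ∧
        (x ∈ D → ∀ᶠ n in atTop, gridCeil b (G n) x = x) := by
  classical
  obtain ⟨e, he⟩ :=
    Set.countable_iff_exists_subset_range.1 (hD.union (countable_range ((↑) : ℚ → ℝ)))
  set G : ℕ → Finset ℝ := fun n => ((Finset.range n).image e).filter (· ∈ Icc a b)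
  have hG : ∀ y ∈ D ∪ range ((↑) : ℚ → ℝ), y ∈ Icc a b → ∀ᶠ n in atTop, y ∈ G n := by
    intro y hy hyab
    obtain ⟨k, rfl⟩ := he hy
    exact eventually_atTop.2 ⟨k + 1, fun n hn => Finset.mem_filter.2
      ⟨Finset.mem_image_of_mem _ (Finset.mem_range.2 (by omega)), hyab⟩⟩
  refine ⟨G, fun n g hg => (Finset.mem_filter.1 hg).2, fun x hx => ⟨?_, fun hxD =>
    (hG x (Or.inl hxD) hx).mono fun n hn => gridCeil_eq_self hn hx.2⟩⟩
  refine tendsto_order.2 ⟨fun l hl => Eventually.of_forall fun n =>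
    hl.trans_le (le_gridCeil hx.2), fun u hu => ?_⟩
  rcases lt_or_ge b u with hbu | hub
  · exact Eventually.of_forall fun n => gridCeil_le_right.trans_lt hbu
  · -- the grids eventually contain a rational point between `x` and `u`
    obtain ⟨r, hxr, hru⟩ := exists_rat_btwn hu
    exact (hG r (Or.inr ⟨r, rfl⟩) ⟨hx.1.trans hxr.le, hru.le.trans hub⟩).mono fun n hn =>
      (gridCeil_le hn hxr.le).trans_lt hru

theorem AntitoneOn.exists_gridCeil_tendsto_comp {a b : ℝ} {ψ : ℝ → ℝ}
    (hψ : AntitoneOn ψ (Icc a b)) :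
    ∃ G : ℕ → Finset ℝ, (∀ n, ∀ g ∈ G n, g ∈ Icc a b) ∧ ∀ x ∈ Icc a b,
      Tendsto (fun n => ψ (gridCeil b (G n) x)) atTop (𝓝 (ψ x)) := by
  obtain ⟨G, hG, hconv⟩ := exists_gridCeil_tendsto a b hψ.countable_not_continuousWithinAt
  refine ⟨G, hG, fun x hx => ?_⟩
  by_cases hc : ContinuousWithinAt ψ (Icc a b) x
  · exact hc.tendsto.comp (tendsto_nhdsWithin_iff.2
      ⟨(hconv x hx).1, Eventually.of_forall fun n => gridCeil_mem_Icc (hG n) hx⟩)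
  · exact tendsto_const_nhds.congr'
      (((hconv x hx).2 ⟨hx, hc⟩).mono fun n hn => congrArg ψ hn.symm)

-- `fun p => rectIncr h p b` is the function `H` described above.
def rectIncr (K : ℝ × ℝ → ℝ) (p q : ℝ × ℝ) : ℝ := K q - K (p.1, q.2) - K (q.1, p.2) + K p

theorem rectIncr_gridCeil_eq_sum (K : ℝ × ℝ → ℝ) {b : ℝ × ℝ} {G₁ G₂ : Finset ℝ}
    (hG₁ : ∀ g ∈ G₁, g ≤ b.1) (hG₂ : ∀ g ∈ G₂, g ≤ b.2) (p : ℝ × ℝ) :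
    rectIncr K (Prod.map (gridCeil b.1 G₁) (gridCeil b.2 G₂) p) b =
      ∑ i ∈ G₁ ×ˢ G₂, (Iic i).indicator
        (fun _ => rectIncr K i (Prod.map (gridSucc b.1 G₁) (gridSucc b.2 G₂) i)) p := by
  set y := gridCeil b.2 G₂ p.2
  have inner : ∀ g, ∑ g' ∈ G₂, (Iic (g, g')).indicator
      (fun _ => rectIncr K (g, g') (Prod.map (gridSucc b.1 G₁) (gridSucc b.2 G₂) (g, g'))) p =
      if p.1 ≤ g then (K (gridSucc b.1 G₁ g, b.2) - K (gridSucc b.1 G₁ g, y)) -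
        (K (g, b.2) - K (g, y)) else 0 := by
    intro g
    split_ifs with hg
    · refine (Finset.sum_congr rfl fun g' _ => ?_).trans
        ((sum_ite_gridSucc_sub (fun w => K (gridSucc b.1 G₁ g, w) - K (g, w)) hG₂ p.2).trans
          (by abel))
      simp only [indicator_apply, mem_Iic, Prod.le_def, hg, true_and, rectIncr, Prod.map_apply]
      split_ifs <;> abel
    · exact Finset.sum_eq_zero fun g' _ => indicator_of_notMem (fun h => hg h.1) _
  rw [Finset.sum_product, Finset.sum_congr rfl fun g _ => inner g,
    sum_ite_gridSucc_sub (fun t => K (t, b.2) - K (t, y)) hG₁ p.1]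
  simp only [rectIncr, Prod.map_fst, Prod.map_snd, y]
  abel

theorem integral_sum_indicator_le_of_measureReal_le {α ι : Type*} [MeasurableSpace α]
    {μ ν : Measure α} [IsFiniteMeasure μ] [IsFiniteMeasure ν] (s : Finset ι) {t : ι → Set α}
    (ht : ∀ i ∈ s, MeasurableSet (t i)) {c : ι → ℝ} (hc : ∀ i ∈ s, 0 ≤ c i)
    (hle : ∀ i ∈ s, ν.real (t i) ≤ μ.real (t i)) :
    ∫ x, ∑ i ∈ s, (t i).indicator (fun _ => c i) x ∂ν ≤
      ∫ x, ∑ i ∈ s, (t i).indicator (fun _ => c i) x ∂μ := by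
  have hint : ∀ (m : Measure α) [IsFiniteMeasure m], ∀ i ∈ s,
      Integrable ((t i).indicator fun _ => c i) m :=
    fun m _ i hi => (integrable_const _).indicator (ht i hi)
  rw [integral_finsetSum s (hint ν), integral_finsetSum s (hint μ)]
  refine Finset.sum_le_sum fun i hi => ?_
  simp only [integral_indicator_const _ (ht i hi), smul_eq_mul]
  exact mul_le_mul_of_nonneg_right (hle i hi) (hc i hi)

theorem abs_rectIncr_le {K : ℝ × ℝ → ℝ} {C : ℝ} (hK : ∀ p, |K p| ≤ C) (p q : ℝ × ℝ) :
    |rectIncr K p q| ≤ 4 * C := by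
  have := hK q; have := hK (p.1, q.2); have := hK (q.1, p.2); have := hK p
  simp only [rectIncr, abs_le] at *
  constructor <;> linarith

theorem measurable_rectIncr_left {K : ℝ × ℝ → ℝ} (hK : Measurable K) (q : ℝ × ℝ) :
    Measurable fun p => rectIncr K p q := by
  unfold rectIncr; fun_prop

theorem integral_rectIncr_left {K : ℝ × ℝ → ℝ} (hK : Measurable K) {C : ℝ} (hC : ∀ p, |K p| ≤ C)
    (ν : Measure (ℝ × ℝ)) [IsFiniteMeasure ν] (b : ℝ × ℝ) :
    ∫ p, rectIncr K p b ∂ν = ν.real univ * K b - ∫ x, K (x, b.2) ∂ν.map Prod.fst -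
      ∫ y, K (b.1, y) ∂ν.map Prod.snd + ∫ p, K p ∂ν := by
  have hint : ∀ f : ℝ × ℝ → ℝ, Measurable f → (∀ p, |f p| ≤ C) → Integrable f ν :=
    fun f hf hfC => .of_bound hf.aestronglyMeasurable C (ae_of_all _ hfC)
  have h₁ : Measurable fun x => K (x, b.2) := by fun_prop
  have h₂ : Measurable fun y => K (b.1, y) := by fun_prop
  have i₀ := integrable_const (μ := ν) (K b)
  have i₁ : Integrable (fun p : ℝ × ℝ => K (p.1, b.2)) ν := hint _ (by fun_prop) fun _ => hC _
  have i₂ : Integrable (fun p : ℝ × ℝ => K (b.1, p.2)) ν := hint _ (by fun_prop) fun _ => hC _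
  rw [integral_map measurable_fst.aemeasurable h₁.aestronglyMeasurable,
    integral_map measurable_snd.aemeasurable h₂.aestronglyMeasurable]
  unfold rectIncr
  rw [integral_add (f := fun p => K b - K (p.1, b.2) - K (b.1, p.2)) ((i₀.sub i₁).sub i₂)
    (hint K hK hC), integral_sub (f := fun p => K b - K (p.1, b.2)) (i₀.sub i₁) i₂,
    integral_sub i₀ i₁, integral_const, smul_eq_mul]

def SupermodularOn {α : Type*} [Lattice α] (f : α → ℝ) (s : Set α) : Prop :=
  ∀ p ∈ s, ∀ q ∈ s, f p + f q ≤ f (p ⊔ q) + f (p ⊓ q)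

section Box

variable {h : ℝ × ℝ → ℝ} {a b : ℝ × ℝ}

theorem SupermodularOn.rectIncr_nonneg (hh : SupermodularOn h (Icc a b)) {p q : ℝ × ℝ}
    (hp : p ∈ Icc a b) (hq : q ∈ Icc a b) (hpq : p ≤ q) : 0 ≤ rectIncr h p q := by
  have := hh (q.1, p.2) ⟨⟨hq.1.1, hp.1.2⟩, ⟨hq.2.1, hp.2.2⟩⟩ (p.1, q.2)
    ⟨⟨hp.1.1, hq.1.2⟩, ⟨hp.2.1, hq.2.2⟩⟩
  rw [Prod.mk_sup_mk, Prod.mk_inf_mk, sup_eq_left.2 hpq.1, sup_eq_right.2 hpq.2,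
    inf_eq_right.2 hpq.1, inf_eq_left.2 hpq.2] at this
  unfold rectIncr
  linarith

theorem SupermodularOn.rectIncr_sub_rectIncr_mem_Icc (hh : SupermodularOn h (Icc a b))
    {x x' y y' : ℝ} (hx : x ∈ Icc a.1 b.1) (hx' : x' ∈ Icc a.1 b.1) (hy : y ∈ Icc a.2 b.2)
    (hy' : y' ∈ Icc a.2 b.2) (hxx' : x ≤ x') (hyy' : y ≤ y') :
    rectIncr h (x, y) b - rectIncr h (x', y') b ∈ Icc 0
      ((rectIncr h (x, a.2) b - rectIncr h (x', a.2) b) +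
        (rectIncr h (a.1, y) b - rectIncr h (a.1, y') b)) := by
  have hmem : ∀ {u v}, u ∈ Icc a.1 b.1 → v ∈ Icc a.2 b.2 → (u, v) ∈ Icc a b :=
    fun hu hv => ⟨⟨hu.1, hv.1⟩, hu.2, hv.2⟩
  have ha₁ : a.1 ∈ Icc a.1 b.1 := left_mem_Icc.2 (hx.1.trans hx.2)
  have hb₁ : b.1 ∈ Icc a.1 b.1 := right_mem_Icc.2 (hx.1.trans hx.2)
  have ha₂ : a.2 ∈ Icc a.2 b.2 := left_mem_Icc.2 (hy.1.trans hy.2)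
  have hb₂ : b.2 ∈ Icc a.2 b.2 := right_mem_Icc.2 (hy.1.trans hy.2)
  have h₁ := hh.rectIncr_nonneg (hmem hx hy) (hmem hb₁ hy') ⟨hx.2, hyy'⟩
  have h₂ := hh.rectIncr_nonneg (hmem ha₁ hy) (hmem hx hy') ⟨hx.1, hyy'⟩
  have h₃ := hh.rectIncr_nonneg (hmem hx hy') (hmem hx' hb₂) ⟨hxx', hy'.2⟩
  have h₄ := hh.rectIncr_nonneg (hmem hx ha₂) (hmem hx' hy') ⟨hxx', hy'.1⟩
  simp only [rectIncr] at h₁ h₂ h₃ h₄ ⊢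
  constructor <;> linarith

theorem SupermodularOn.integral_rectIncr_gridCeil_le (hh : SupermodularOn h (Icc a b))
    {μ ν : Measure (ℝ × ℝ)} [IsFiniteMeasure μ] [IsFiniteMeasure ν]
    (hIic : ∀ p, ν.real (Iic p) ≤ μ.real (Iic p)) {G₁ G₂ : Finset ℝ}
    (hG₁ : ∀ g ∈ G₁, g ∈ Icc a.1 b.1) (hG₂ : ∀ g ∈ G₂, g ∈ Icc a.2 b.2) :
    ∫ p, rectIncr h (Prod.map (gridCeil b.1 G₁) (gridCeil b.2 G₂) p) b ∂ν ≤
      ∫ p, rectIncr h (Prod.map (gridCeil b.1 G₁) (gridCeil b.2 G₂) p) b ∂μ := by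
  simp only [rectIncr_gridCeil_eq_sum h (fun g hg => (hG₁ g hg).2) (fun g hg => (hG₂ g hg).2)]
  refine integral_sum_indicator_le_of_measureReal_le _ (fun _ _ => measurableSet_Iic)
    (fun i hi => ?_) (fun i _ => hIic i)
  obtain ⟨hi₁, hi₂⟩ := Finset.mem_product.1 hi
  have hx := hG₁ _ hi₁
  have hy := hG₂ _ hi₂
  have hx' := gridSucc_mem_Icc hG₁ hx
  have hy' := gridSucc_mem_Icc hG₂ hy
  exact hh.rectIncr_nonneg ⟨⟨hx.1, hy.1⟩, hx.2, hy.2⟩ ⟨⟨hx'.1, hy'.1⟩, hx'.2, hy'.2⟩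
    ⟨le_gridSucc hx.2, le_gridSucc hy.2⟩

theorem SupermodularOn.tendsto_rectIncr_gridCeil (hh : SupermodularOn h (Icc a b))
    {G₁ G₂ : ℕ → Finset ℝ} (hG₁ : ∀ n, ∀ g ∈ G₁ n, g ∈ Icc a.1 b.1)
    (hG₂ : ∀ n, ∀ g ∈ G₂ n, g ∈ Icc a.2 b.2)
    (hlim₁ : ∀ x ∈ Icc a.1 b.1, Tendsto (fun n => rectIncr h (gridCeil b.1 (G₁ n) x, a.2) b)
      atTop (𝓝 (rectIncr h (x, a.2) b)))
    (hlim₂ : ∀ y ∈ Icc a.2 b.2, Tendsto (fun n => rectIncr h (a.1, gridCeil b.2 (G₂ n) y) b)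
      atTop (𝓝 (rectIncr h (a.1, y) b)))
    {p : ℝ × ℝ} (hp : p ∈ Icc a b) :
    Tendsto (fun n => rectIncr h (Prod.map (gridCeil b.1 (G₁ n)) (gridCeil b.2 (G₂ n)) p) b)
      atTop (𝓝 (rectIncr h p b)) := by
  have hx : p.1 ∈ Icc a.1 b.1 := ⟨hp.1.1, hp.2.1⟩
  have hy : p.2 ∈ Icc a.2 b.2 := ⟨hp.1.2, hp.2.2⟩
  have hgap := fun n => hh.rectIncr_sub_rectIncr_mem_Icc hx (gridCeil_mem_Icc (hG₁ n) hx) hy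
    (gridCeil_mem_Icc (hG₂ n) hy) (le_gridCeil hx.2) (le_gridCeil hy.2)
  have hbound := ((tendsto_const_nhds (x := rectIncr h (p.1, a.2) b)).sub (hlim₁ _ hx)).add
    ((tendsto_const_nhds (x := rectIncr h (a.1, p.2) b)).sub (hlim₂ _ hy))
  rw [sub_self, sub_self, add_zero] at hbound
  simpa [Prod.map] using (tendsto_const_nhds (x := rectIncr h p b)).sub
    (squeeze_zero (fun n => (hgap n).1) (fun n => (hgap n).2) hbound)

theorem SupermodularOn.integral_le_integral_of_measureReal_Iic_le
    (hh : SupermodularOn h (Icc a b)) (hmeas : Measurable h) {C : ℝ} (hC : ∀ p, |h p| ≤ C)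
    {μ ν : Measure (ℝ × ℝ)} [IsFiniteMeasure μ] [IsFiniteMeasure ν] (hμ : μ (Icc a b)ᶜ = 0)
    (hν : ν (Icc a b)ᶜ = 0) (hfst : ν.map Prod.fst = μ.map Prod.fst)
    (hsnd : ν.map Prod.snd = μ.map Prod.snd) (hIic : ∀ p, ν.real (Iic p) ≤ μ.real (Iic p)) :
    ∫ p, h p ∂ν ≤ ∫ p, h p ∂μ := by
  rcases (Icc a b).eq_empty_or_nonempty with hE | ⟨c, hc⟩
  · rw [hE, compl_empty, Measure.measure_univ_eq_zero] at hμ hν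
    simp [hμ, hν]
  have huniv : ν.real univ = μ.real univ := by
    rw [← preimage_univ (f := Prod.fst), ← map_measureReal_apply measurable_fst .univ, hfst,
      map_measureReal_apply measurable_fst .univ]
  suffices ∫ p, rectIncr h p b ∂ν ≤ ∫ p, rectIncr h p b ∂μ by
    rw [integral_rectIncr_left hmeas hC, integral_rectIncr_left hmeas hC, hfst, hsnd, huniv]
      at this
    linarith
  have ha₁ : a.1 ∈ Icc a.1 b.1 := left_mem_Icc.2 (hc.1.1.trans hc.2.1)
  have ha₂ : a.2 ∈ Icc a.2 b.2 := left_mem_Icc.2 (hc.1.2.trans hc.2.2)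
  obtain ⟨G₁, hG₁, hlim₁⟩ := AntitoneOn.exists_gridCeil_tendsto_comp
    (ψ := fun x => rectIncr h (x, a.2) b) fun x hx x' hx' hxx' =>
      sub_nonneg.1 (hh.rectIncr_sub_rectIncr_mem_Icc hx hx' ha₂ ha₂ hxx' le_rfl).1
  obtain ⟨G₂, hG₂, hlim₂⟩ := AntitoneOn.exists_gridCeil_tendsto_comp
    (ψ := fun y => rectIncr h (a.1, y) b) fun y hy y' hy' hyy' =>
      sub_nonneg.1 (hh.rectIncr_sub_rectIncr_mem_Icc ha₁ ha₁ hy hy' le_rfl hyy').1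
  have hlim : ∀ (m : Measure (ℝ × ℝ)) [IsFiniteMeasure m], m (Icc a b)ᶜ = 0 →
      Tendsto (fun n => ∫ p, rectIncr h (Prod.map (gridCeil b.1 (G₁ n))
        (gridCeil b.2 (G₂ n)) p) b ∂m) atTop (𝓝 (∫ p, rectIncr h p b ∂m)) :=
    fun m _ hm => tendsto_integral_of_dominated_convergence (fun _ => 4 * C)
      (fun n => ((measurable_rectIncr_left hmeas b).comp
        (monotone_gridCeil.measurable.prodMap monotone_gridCeil.measurable)).aestronglyMeasurable)
      (integrable_const _) (fun n => ae_of_all _ fun p => abs_rectIncr_le hC _ _)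
      ((ae_iff.2 hm).mono fun p hp => hh.tendsto_rectIncr_gridCeil hG₁ hG₂ hlim₁ hlim₂ hp)
  exact le_of_tendsto_of_tendsto' (hlim ν hν) (hlim μ hμ) fun n =>
    hh.integral_rectIncr_gridCeil_le hIic (hG₁ n) (hG₂ n)

end Box

theorem measureReal_map_fst_add_map_snd_le {α β : Type*} [MeasurableSpace α]
    [MeasurableSpace β] (μ : Measure (α × β)) [IsFiniteMeasure μ] {s : Set α} {t : Set β}
    (hs : MeasurableSet s) (ht : MeasurableSet t) :
    (μ.map Prod.fst).real s + (μ.map Prod.snd).real t ≤ μ.real (s ×ˢ t) + μ.real univ := by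
  rw [map_measureReal_apply measurable_fst hs, map_measureReal_apply measurable_snd ht, Set.prod_eq,
    ← measureReal_union_add_inter (s := Prod.fst ⁻¹' s) (ht.preimage measurable_snd)]
  linarith [measureReal_mono (μ := μ) (subset_univ (Prod.fst ⁻¹' s ∪ Prod.snd ⁻¹' t))]

noncomputable def quantile (μ : Measure ℝ) (u : ℝ) : ℝ := sInf {x | u ≤ cdf μ x}

section Quantile

variable {μ : Measure ℝ} {u : ℝ}

theorem quantile_le_iff (hu : u ∈ Ioo 0 1) (x : ℝ) : quantile μ u ≤ x ↔ u ≤ cdf μ x := by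
  set S := {x | u ≤ cdf μ x}
  have hne : S.Nonempty :=
    ((tendsto_order.1 (tendsto_cdf_atTop μ)).1 u hu.2).exists.imp fun _ => le_of_lt
  have hbdd : BddBelow S := by
    obtain ⟨x₀, hx₀⟩ := eventually_atBot.1 ((tendsto_order.1 (tendsto_cdf_atBot μ)).2 u hu.1)
    exact ⟨x₀, fun y hy => le_of_not_gt fun h => (hx₀ y h.le).not_ge hy⟩
  -- right continuity of the cdf puts the infimum into `S`
  have hmem : sInf S ∈ S := by
    refine ge_of_tendsto ((cdf μ).right_continuous _ |>.mono Ioi_subset_Ici_self)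
      (eventually_nhdsWithin_of_forall fun y hy => ?_)
    obtain ⟨z, hz, hzy⟩ := exists_lt_of_csInf_lt hne hy
    exact hz.trans (monotone_cdf μ hzy.le)
  exact ⟨fun h => hmem.trans (monotone_cdf μ h), fun h => csInf_le hbdd h⟩

theorem quantile_monotoneOn : MonotoneOn (quantile μ) (Ioo 0 1) := fun _ hu _ hv huv =>
  (quantile_le_iff hu _).2 (huv.trans ((quantile_le_iff hv _).1 le_rfl))

theorem quantile_mem_Icc [IsProbabilityMeasure μ] {a b : ℝ} (hμ : μ (Icc a b)ᶜ = 0)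
    (hu : u ∈ Ioo 0 1) : quantile μ u ∈ Icc a b := by
  refine ⟨le_of_forall_lt fun x hx => not_le.1 fun hle => ?_, (quantile_le_iff hu b).2 ?_⟩
  · have h0 : μ (Iic x) = 0 :=
      measure_mono_null (fun y (hy : y ≤ x) (hy' : y ∈ Icc a b) => (hy'.1.trans hy).not_gt hx) hμ
    have := (quantile_le_iff hu x).1 hle
    rw [cdf_eq_real, measureReal_def, h0, ENNReal.toReal_zero] at this
    exact hu.1.not_ge this
  · have h1 : μ (Iic b)ᶜ = 0 :=
      measure_mono_null (fun y (hy : ¬y ≤ b) (hy' : y ∈ Icc a b) => hy hy'.2) hμ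
    rw [cdf_eq_real, measureReal_def, (prob_compl_eq_zero_iff measurableSet_Iic).1 h1]
    exact ENNReal.toReal_one.symm ▸ hu.2.le

end Quantile

theorem volume_Ioo_inter_Icc {c d : ℝ} (hc : 0 ≤ c) (hd : d ≤ 1) :
    volume (Ioo 0 1 ∩ Icc c d) = ENNReal.ofReal (d - c) :=
  le_antisymm ((measure_mono inter_subset_right).trans_eq Real.volume_Icc)
    (Real.volume_Ioo ▸ measure_mono fun _ hu =>
      ⟨⟨hc.trans_lt hu.1, hu.2.trans_le hd⟩, hu.1.le, hu.2.le⟩)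

noncomputable def antitoneCoupling (μ₁ μ₂ : Measure ℝ) : Measure (ℝ × ℝ) :=
  (volume.restrict (Icc 0 1)).map fun u => (quantile μ₁ u, quantile μ₂ (1 - u))

section AntitoneCoupling

variable (μ₁ μ₂ : Measure ℝ)

theorem antitoneCoupling_apply {s : Set (ℝ × ℝ)} (hs : MeasurableSet s) :
    antitoneCoupling μ₁ μ₂ s =
      volume ({u | (quantile μ₁ u, quantile μ₂ (1 - u)) ∈ s} ∩ Ioo 0 1) := by
  have hf : AEMeasurable (fun u => (quantile μ₁ u, quantile μ₂ (1 - u)))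
      (volume.restrict (Ioo 0 1)) :=
    (aemeasurable_restrict_of_monotoneOn measurableSet_Ioo quantile_monotoneOn).prodMk
      (aemeasurable_restrict_of_antitoneOn measurableSet_Ioo fun _ hu _ hv huv =>
        quantile_monotoneOn (Ioo.one_sub_mem hv) (Ioo.one_sub_mem hu) (by linarith))
  rw [antitoneCoupling, ← Measure.restrict_congr_set Ioo_ae_eq_Icc,
    Measure.map_apply_of_aemeasurable hf hs, Measure.restrict_apply' measurableSet_Ioo]
  rfl

instance : IsProbabilityMeasure (antitoneCoupling μ₁ μ₂) :=
  ⟨by simp [antitoneCoupling_apply _ _ MeasurableSet.univ]⟩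

theorem antitoneCoupling_Iic (x y : ℝ) :
    antitoneCoupling μ₁ μ₂ (Iic (x, y)) = ENNReal.ofReal (cdf μ₁ x + cdf μ₂ y - 1) := by
  have : {u | (quantile μ₁ u, quantile μ₂ (1 - u)) ∈ Iic (x, y)} ∩ Ioo 0 1 =
      Ioo 0 1 ∩ Icc (1 - cdf μ₂ y) (cdf μ₁ x) := by
    ext u
    simp only [mem_inter_iff, mem_ofPred_eq, mem_Iic, Prod.mk_le_mk, mem_Icc]
    refine ⟨fun ⟨⟨h₁, h₂⟩, hu⟩ => ⟨hu, ?_, (quantile_le_iff hu x).1 h₁⟩,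
      fun ⟨hu, h₂, h₁⟩ => ⟨⟨(quantile_le_iff hu x).2 h₁,
        (quantile_le_iff (Ioo.one_sub_mem hu) y).2 (by linarith)⟩, hu⟩⟩
    linarith [(quantile_le_iff (Ioo.one_sub_mem hu) y).1 h₂]
  rw [antitoneCoupling_apply _ _ measurableSet_Iic, this,
    volume_Ioo_inter_Icc (by linarith [cdf_le_one μ₂ y]) (cdf_le_one μ₁ x)]
  ring_nf

theorem measureReal_antitoneCoupling_Iic (x y : ℝ) :
    (antitoneCoupling μ₁ μ₂).real (Iic (x, y)) = max (cdf μ₁ x + cdf μ₂ y - 1) 0 := by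
  rw [measureReal_def, antitoneCoupling_Iic, ENNReal.toReal_ofReal']

theorem antitoneCoupling_map_fst [IsProbabilityMeasure μ₁] :
    (antitoneCoupling μ₁ μ₂).map Prod.fst = μ₁ := by
  refine Measure.ext_of_Iic _ _ fun x => ?_
  have : {u | (quantile μ₁ u, quantile μ₂ (1 - u)) ∈ Prod.fst ⁻¹' Iic x} ∩ Ioo 0 1 =
      Ioo 0 1 ∩ Icc 0 (cdf μ₁ x) := by
    ext u
    simp only [mem_inter_iff, mem_ofPred_eq, mem_preimage, mem_Iic, mem_Icc]
    exact ⟨fun ⟨h, hu⟩ => ⟨hu, hu.1.le, (quantile_le_iff hu x).1 h⟩,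
      fun ⟨hu, _, h⟩ => ⟨(quantile_le_iff hu x).2 h, hu⟩⟩
  rw [Measure.map_apply measurable_fst measurableSet_Iic,
    antitoneCoupling_apply _ _ (measurable_fst measurableSet_Iic), this,
    volume_Ioo_inter_Icc le_rfl (cdf_le_one μ₁ x), sub_zero, ofReal_cdf]

theorem antitoneCoupling_map_snd [IsProbabilityMeasure μ₂] :
    (antitoneCoupling μ₁ μ₂).map Prod.snd = μ₂ := by
  refine Measure.ext_of_Iic _ _ fun y => ?_
  have : {u | (quantile μ₁ u, quantile μ₂ (1 - u)) ∈ Prod.snd ⁻¹' Iic y} ∩ Ioo 0 1 =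
      Ioo 0 1 ∩ Icc (1 - cdf μ₂ y) 1 := by
    ext u
    simp only [mem_inter_iff, mem_ofPred_eq, mem_preimage, mem_Iic, mem_Icc]
    refine ⟨fun ⟨h, hu⟩ => ⟨hu, ?_, hu.2.le⟩,
      fun ⟨hu, h, _⟩ => ⟨(quantile_le_iff (Ioo.one_sub_mem hu) y).2 (by linarith), hu⟩⟩
    linarith [(quantile_le_iff (Ioo.one_sub_mem hu) y).1 h]
  rw [Measure.map_apply measurable_snd measurableSet_Iic,
    antitoneCoupling_apply _ _ (measurable_snd measurableSet_Iic), this,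
    volume_Ioo_inter_Icc (by linarith [cdf_le_one μ₂ y]) le_rfl, sub_sub_cancel, ofReal_cdf]

theorem antitoneCoupling_compl_Icc [IsProbabilityMeasure μ₁] [IsProbabilityMeasure μ₂]
    {a₁ b₁ a₂ b₂ : ℝ} (h₁ : μ₁ (Icc a₁ b₁)ᶜ = 0) (h₂ : μ₂ (Icc a₂ b₂)ᶜ = 0) :
    antitoneCoupling μ₁ μ₂ (Icc (a₁, a₂) (b₁, b₂))ᶜ = 0 := by
  rw [antitoneCoupling_apply _ _ measurableSet_Icc.compl]
  refine measure_mono_null (fun u ⟨hu, hu'⟩ => hu ?_) measure_empty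
  have hq₁ := quantile_mem_Icc h₁ hu'
  have hq₂ := quantile_mem_Icc h₂ (Ioo.one_sub_mem hu')
  exact ⟨⟨hq₁.1, hq₂.1⟩, hq₁.2, hq₂.2⟩

theorem measureReal_antitoneCoupling_Iic_le [IsProbabilityMeasure μ₁] [IsProbabilityMeasure μ₂]
    {μ : Measure (ℝ × ℝ)} [IsProbabilityMeasure μ] (h₁ : μ.map Prod.fst = μ₁)
    (h₂ : μ.map Prod.snd = μ₂) (p : ℝ × ℝ) :
    (antitoneCoupling μ₁ μ₂).real (Iic p) ≤ μ.real (Iic p) := by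
  have := measureReal_map_fst_add_map_snd_le μ (measurableSet_Iic (a := p.1))
    (measurableSet_Iic (a := p.2))
  rw [h₁, h₂, Iic_prod_Iic, probReal_univ, ← cdf_eq_real, ← cdf_eq_real] at this
  rw [measureReal_antitoneCoupling_Iic]
  exact max_le (by linarith) measureReal_nonneg

end AntitoneCoupling

/-- The antitone coupling of two distributions: it has the prescribed
marginals, its joint CDF is `max (F₁ x + F₂ y - 1) 0`, and it is minimal in the supermodular
order among all couplings of `(F₁, F₂)`. -/
theorem antitone_coupling_properties
    (a₁ b₁ a₂ b₂ : ℝ)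
    (μ₁ μ₂ : Measure ℝ) [IsProbabilityMeasure μ₁] [IsProbabilityMeasure μ₂]
    (hsupp₁ : μ₁ (Set.Icc a₁ b₁)ᶜ = 0) (hsupp₂ : μ₂ (Set.Icc a₂ b₂)ᶜ = 0)
    (F₁ F₂ : ℝ → ℝ)
    (hF₁ : ∀ x, F₁ x = (μ₁ (Set.Iic x)).toReal)
    (hF₂ : ∀ x, F₂ x = (μ₂ (Set.Iic x)).toReal)
    (q₁ q₂ : ℝ → ℝ)
    (hq₁ : ∀ u, q₁ u = sInf {x | u ≤ F₁ x})
    (hq₂ : ∀ u, q₂ u = sInf {x | u ≤ F₂ x})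
    (A : Measure (ℝ × ℝ))
    (hA : A = (volume.restrict (Set.Icc (0:ℝ) 1)).map (fun u => (q₁ u, q₂ (1 - u)))) :
    A.map Prod.fst = μ₁ ∧ A.map Prod.snd = μ₂ ∧
    (∀ x y : ℝ, (A (Set.Iic (x, y))).toReal = max (F₁ x + F₂ y - 1) 0) ∧
    (∀ μ : Measure (ℝ × ℝ), IsProbabilityMeasure μ →
      μ (Set.Icc (a₁, a₂) (b₁, b₂))ᶜ = 0 →
      μ.map Prod.fst = μ₁ → μ.map Prod.snd = μ₂ →
      ∀ h : ℝ × ℝ → ℝ, Measurable h → (∃ C, ∀ p, |h p| ≤ C) →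
        (∀ p ∈ Set.Icc (a₁, a₂) (b₁, b₂), ∀ q ∈ Set.Icc (a₁, a₂) (b₁, b₂),
          h p + h q ≤ h (p ⊔ q) + h (p ⊓ q)) →
        ∫ p, h p ∂A ≤ ∫ p, h p ∂μ) := by
  obtain rfl : F₁ = cdf μ₁ := funext fun x => (hF₁ x).trans (cdf_eq_real μ₁ x).symm
  obtain rfl : F₂ = cdf μ₂ := funext fun x => (hF₂ x).trans (cdf_eq_real μ₂ x).symm
  obtain rfl : q₁ = quantile μ₁ := funext hq₁
  obtain rfl : q₂ = quantile μ₂ := funext hq₂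
  obtain rfl : A = antitoneCoupling μ₁ μ₂ := hA
  refine ⟨antitoneCoupling_map_fst μ₁ μ₂, antitoneCoupling_map_snd μ₁ μ₂,
    measureReal_antitoneCoupling_Iic μ₁ μ₂, fun μ _ hμ hμ₁ hμ₂ h hmeas ⟨C, hC⟩ hh => ?_⟩
  exact SupermodularOn.integral_le_integral_of_measureReal_Iic_le (h := h) hh hmeas hC hμ
    (antitoneCoupling_compl_Icc μ₁ μ₂ hsupp₁ hsupp₂)
    ((antitoneCoupling_map_fst μ₁ μ₂).trans hμ₁.symm)
    ((antitoneCoupling_map_snd μ₁ μ₂).trans hμ₂.symm)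
    (measureReal_antitoneCoupling_Iic_le μ₁ μ₂ hμ₁ hμ₂)
end

section
/- Let X be a real random variable with values in a compact interval [m, M], with CDF F_X and left-continuous quantile function q_X(u) = inf{x : F_X(x) ≥ u}, and set H(p) = ∫₀^p q_X(u) du for p ∈ [0,1]. Then for every z ∈ ℝ, ∫_m^z F_X(x) dx = sup_{p ∈ [0,1]} ( z·p − H(p) ); that is, the integrated CDF of X is the convex conjugate (restricted to [0,1]) of the cumulative quantile function H. -/
open MeasureTheory ProbabilityTheory Set Filter Topology

/-!
For `u ∈ (0, 1]` the quantile is the lower adjoint of the CDF: `q u ≤ x ↔ u ≤ F x`, because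
right continuity puts the infimum `q u` into `{x | u ≤ F x}`. Computing the area of
`{(x, u) | u ≤ F x}` over `[m, z] × (0, 1]` by slicing in both directions gives
`∫_m^z F = ∫_0^1 (z - q u)⁺ du`. Since `z p - H p = ∫_0^p (z - q u) du`, this bounds every value
of the conjugate, and the bound is attained at `p = F z`: `z - q u ≥ 0` exactly when `u ≤ F z`.
-/

theorem integral_measureReal_prodMk_comm {α β : Type*} [MeasurableSpace α] [MeasurableSpace β]
    (μ : Measure α) (ν : Measure β) [IsFiniteMeasure μ] [IsFiniteMeasure ν] {s : Set (α × β)}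
    (hs : MeasurableSet s) :
    ∫ x, ν.real (Prod.mk x ⁻¹' s) ∂μ = ∫ y, μ.real ((·, y) ⁻¹' s) ∂ν := by
  simp only [measureReal_def]
  rw [integral_toReal (measurable_measure_prodMk_left hs).aemeasurable
      (ae_of_all _ fun _ => measure_lt_top ν _),
    integral_toReal (measurable_measure_prodMk_right hs).aemeasurable
      (ae_of_all _ fun _ => measure_lt_top μ _),
    ← Measure.prod_apply hs, ← Measure.prod_apply_symm hs]

theorem Real.volume_real_Ici_inter_Icc {a m z : ℝ} (h : m ≤ a) :
    volume.real (Ici a ∩ Icc m z) = (z - a)⁺ := by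
  rw [← Ici_inter_Iic, ← inter_assoc, Ici_inter_Ici, max_eq_left h, Ici_inter_Iic,
    Real.volume_real_Icc]
  rfl

namespace StieltjesFunction

noncomputable def quantile (F : StieltjesFunction ℝ) (u : ℝ) : ℝ := sInf {x | u ≤ F x}

variable (F : StieltjesFunction ℝ) {m M u : ℝ}

theorem le_apply_quantile (hne : {x | u ≤ F x}.Nonempty) :
    u ≤ F (F.quantile u) := by
  have hlim : Tendsto F (𝓝[>] (F.quantile u)) (𝓝 (F (F.quantile u))) :=
    (F.right_continuous _).mono Ioi_subset_Ici_self
  refine ge_of_tendsto hlim ?_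
  filter_upwards [self_mem_nhdsWithin] with x hx
  obtain ⟨y, hy, hyx⟩ := exists_lt_of_csInf_lt hne hx
  exact hy.trans (F.mono hyx.le)

theorem quantile_le_iff (hne : {x | u ≤ F x}.Nonempty) (hbdd : BddBelow {x | u ≤ F x})
    {x : ℝ} : F.quantile u ≤ x ↔ u ≤ F x :=
  ⟨fun h => (F.le_apply_quantile hne).trans (F.mono h), fun h => csInf_le hbdd h⟩

variable {F}

theorem apply_mem_Icc (hm : ∀ x < m, F x = 0) (hM : ∀ x, M ≤ x → F x = 1) (x : ℝ) :
    F x ∈ Icc 0 1 :=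
  ⟨(hm _ (min_lt_of_right_lt (sub_one_lt m))).symm.le.trans (F.mono (min_le_left x (m - 1))),
    (F.mono (le_max_left x M)).trans (hM _ (le_max_right x M)).le⟩

theorem quantile_le_iff_of_mem_Ioc (hm : ∀ x < m, F x = 0) (hM : ∀ x, M ≤ x → F x = 1)
    (hu : u ∈ Ioc 0 1) {x : ℝ} : F.quantile u ≤ x ↔ u ≤ F x :=
  F.quantile_le_iff ⟨M, hu.2.trans (hM M le_rfl).ge⟩
    ⟨m, fun y hy => not_lt.1 fun hym => hu.1.not_ge (hy.trans (hm y hym).le)⟩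

theorem quantile_mem_Icc (hm : ∀ x < m, F x = 0) (hM : ∀ x, M ≤ x → F x = 1)
    (hu : u ∈ Ioc 0 1) : F.quantile u ∈ Icc m M :=
  ⟨not_lt.1 fun h => hu.1.not_ge (((quantile_le_iff_of_mem_Ioc hm hM hu).1 le_rfl).trans
      (hm _ h).le),
    (quantile_le_iff_of_mem_Ioc hm hM hu).2 (hu.2.trans (hM M le_rfl).ge)⟩

theorem monotoneOn_quantile (hm : ∀ x < m, F x = 0) (hM : ∀ x, M ≤ x → F x = 1) :
    MonotoneOn F.quantile (Ioc 0 1) := fun _ hu _ hv huv =>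
  (quantile_le_iff_of_mem_Ioc hm hM hu).2
    (huv.trans ((quantile_le_iff_of_mem_Ioc hm hM hv).1 le_rfl))

theorem integrableOn_quantile (hm : ∀ x < m, F x = 0) (hM : ∀ x, M ≤ x → F x = 1) :
    IntegrableOn F.quantile (Ioc 0 1) :=
  Integrable.of_bound
    (aemeasurable_restrict_of_monotoneOn measurableSet_Ioc
      (monotoneOn_quantile hm hM)).aestronglyMeasurable (max |m| |M|)
    (ae_restrict_of_forall_mem measurableSet_Ioc fun _ hu =>
      abs_le_max_abs_abs (quantile_mem_Icc hm hM hu).1 (quantile_mem_Icc hm hM hu).2)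

theorem posPart_sub_quantile_eq_indicator (hm : ∀ x < m, F x = 0)
    (hM : ∀ x, M ≤ x → F x = 1) (z : ℝ) (hu : u ∈ Ioc 0 1) :
    (z - F.quantile u)⁺ = (Iic (F z)).indicator (fun u => z - F.quantile u) u := by
  by_cases h : u ∈ Iic (F z)
  · rw [indicator_of_mem h, posPart_eq_self, sub_nonneg]
    exact (quantile_le_iff_of_mem_Ioc hm hM hu).2 h
  · rw [indicator_of_notMem h, posPart_eq_zero, sub_nonpos]
    exact (not_le.1 (mt (quantile_le_iff_of_mem_Ioc hm hM hu).1 h)).le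

theorem integral_posPart_sub_quantile_eq_integral_sub_quantile (hm : ∀ x < m, F x = 0)
    (hM : ∀ x, M ≤ x → F x = 1) (z : ℝ) :
    ∫ u in Ioc 0 1, (z - F.quantile u)⁺ = ∫ u in Ioc 0 (F z), (z - F.quantile u) := by
  rw [setIntegral_congr_fun measurableSet_Ioc fun _ hu =>
      posPart_sub_quantile_eq_indicator hm hM z hu,
    integral_indicator measurableSet_Iic, Measure.restrict_restrict measurableSet_Iic,
    Iic_inter_Ioc_of_le (apply_mem_Icc hm hM z).2]

theorem integral_Icc_eq_integral_posPart_sub_quantile (hm : ∀ x < m, F x = 0)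
    (hM : ∀ x, M ≤ x → F x = 1) (z : ℝ) :
    ∫ x in Icc m z, F x = ∫ u in Ioc 0 1, (z - F.quantile u)⁺ := by
  have hs : MeasurableSet {p : ℝ × ℝ | p.2 ≤ F p.1} :=
    measurableSet_le measurable_snd (F.mono.measurable.comp measurable_fst)
  have hslice_x (x : ℝ) :
      (volume.restrict (Ioc 0 1)).real (Prod.mk x ⁻¹' {p : ℝ × ℝ | p.2 ≤ F p.1}) = F x := by
    change (volume.restrict (Ioc 0 1)).real (Iic (F x)) = F x
    rw [measureReal_restrict_apply measurableSet_Iic,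
      Iic_inter_Ioc_of_le (apply_mem_Icc hm hM x).2,
      Real.volume_real_Ioc_of_le (apply_mem_Icc hm hM x).1, sub_zero]
  have hslice_u (u : ℝ) (hu : u ∈ Ioc 0 1) :
      (volume.restrict (Icc m z)).real ((·, u) ⁻¹' {p : ℝ × ℝ | p.2 ≤ F p.1}) =
        (z - F.quantile u)⁺ := by
    have hpre : (·, u) ⁻¹' {p : ℝ × ℝ | p.2 ≤ F p.1} = Ici (F.quantile u) :=
      Set.ext fun _ => (quantile_le_iff_of_mem_Ioc hm hM hu).symm
    rw [hpre, measureReal_restrict_apply measurableSet_Ici,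
      Real.volume_real_Ici_inter_Icc (quantile_mem_Icc hm hM hu).1]
  rw [← setIntegral_congr_fun measurableSet_Ioc hslice_u,
    ← integral_measureReal_prodMk_comm _ _ hs]
  simp_rw [hslice_x]

theorem intervalIntegral_eq_integral_Icc (hm : ∀ x < m, F x = 0) (z : ℝ) :
    ∫ x in m..z, F x = ∫ x in Icc m z, F x := by
  rcases le_or_gt m z with h | h
  · rw [intervalIntegral.integral_of_le h, integral_Icc_eq_integral_Ioc]
  · rw [Icc_eq_empty h.not_ge, Measure.restrict_empty, integral_zero_measure,
      intervalIntegral.integral_symm, intervalIntegral.integral_of_le h.le,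
      integral_Ioc_eq_integral_Ioo, setIntegral_eq_zero_of_forall_eq_zero fun x hx => hm x hx.2,
      neg_zero]

theorem mul_sub_integral_quantile_eq (hm : ∀ x < m, F x = 0) (hM : ∀ x, M ≤ x → F x = 1)
    (z : ℝ) {p : ℝ} (hp : p ∈ Icc 0 1) :
    z * p - ∫ u in 0..p, F.quantile u = ∫ u in Ioc 0 p, (z - F.quantile u) := by
  have hint : IntegrableOn F.quantile (Ioc 0 p) :=
    (integrableOn_quantile hm hM).mono_set (Ioc_subset_Ioc_right hp.2)
  rw [intervalIntegral.integral_of_le hp.1, integral_sub (integrable_const z) hint,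
    setIntegral_const, Real.volume_real_Ioc_of_le hp.1, sub_zero, smul_eq_mul, mul_comm]

theorem isGreatest_image_mul_sub_integral_quantile (hm : ∀ x < m, F x = 0)
    (hM : ∀ x, M ≤ x → F x = 1) (z : ℝ) :
    IsGreatest ((fun p => z * p - ∫ u in 0..p, F.quantile u) '' Icc 0 1)
      (∫ u in Ioc 0 1, (z - F.quantile u)⁺) := by
  have hint : IntegrableOn (fun u => z - F.quantile u) (Ioc 0 1) :=
    (integrableOn_const (by simp)).sub (integrableOn_quantile hm hM)
  have hint_pos : IntegrableOn (fun u => (z - F.quantile u)⁺) (Ioc 0 1) := hint.pos_part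
  refine ⟨⟨F z, apply_mem_Icc hm hM z, ?_⟩, ?_⟩
  · dsimp only
    rw [mul_sub_integral_quantile_eq hm hM z (apply_mem_Icc hm hM z),
      integral_posPart_sub_quantile_eq_integral_sub_quantile hm hM]
  · rintro _ ⟨p, hp, rfl⟩
    have hsub : Ioc 0 p ⊆ Ioc (0 : ℝ) 1 := Ioc_subset_Ioc_right hp.2
    dsimp only
    rw [mul_sub_integral_quantile_eq hm hM z hp]
    calc ∫ u in Ioc 0 p, (z - F.quantile u)
        ≤ ∫ u in Ioc 0 p, (z - F.quantile u)⁺ :=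
          setIntegral_mono_on (hint.mono_set hsub) (hint_pos.mono_set hsub)
            measurableSet_Ioc fun _ _ => le_posPart _
      _ ≤ ∫ u in Ioc 0 1, (z - F.quantile u)⁺ :=
          setIntegral_mono_set hint_pos (ae_of_all _ fun _ => posPart_nonneg _)
            hsub.eventuallyLE

end StieltjesFunction

/-- The integrated CDF of a compactly supported random variable is the
convex conjugate (restricted to `[0,1]`) of the cumulative quantile function. -/
theorem integrated_cdf_eq_conjugate_of_cumulative_quantile
    {Ω : Type*} [MeasurableSpace Ω] (P : Measure Ω) [IsProbabilityMeasure P]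
    (m M : ℝ) (X : Ω → ℝ) (hX : Measurable X) (hrange : ∀ ω, X ω ∈ Set.Icc m M)
    (Fx : ℝ → ℝ) (hFx : ∀ x, Fx x = (P {ω | X ω ≤ x}).toReal)
    (qX : ℝ → ℝ) (hqX : ∀ u, qX u = sInf {x : ℝ | u ≤ Fx x})
    (H : ℝ → ℝ) (hH : ∀ p, H p = ∫ u in (0:ℝ)..p, qX u) :
    ∀ z : ℝ, ∫ x in m..z, Fx x = sSup ((fun p => z * p - H p) '' Set.Icc (0:ℝ) 1) := by
  intro z
  have hm : ∀ x < m, Fx x = 0 := fun x hx => by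
    have hempty : {ω | X ω ≤ x} = ∅ :=
      eq_empty_of_forall_notMem fun ω hω => hx.not_ge ((hrange ω).1.trans hω)
    rw [hFx, hempty, measure_empty, ENNReal.toReal_zero]
  have hM : ∀ x, M ≤ x → Fx x = 1 := fun x hx => by
    have huniv : {ω | X ω ≤ x} = univ := eq_univ_of_forall fun ω => (hrange ω).2.trans hx
    rw [hFx, huniv, measure_univ, ENNReal.toReal_one]
  have := Measure.isProbabilityMeasure_map (μ := P) hX.aemeasurable
  obtain rfl : Fx = cdf (P.map X) := funext fun x => by
    rw [hFx, cdf_eq_real, measureReal_def, Measure.map_apply hX measurableSet_Iic]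
    rfl
  obtain rfl : qX = (cdf (P.map X)).quantile := funext hqX
  obtain rfl : H = fun p => ∫ u in 0..p, (cdf (P.map X)).quantile u := funext hH
  rw [StieltjesFunction.intervalIntegral_eq_integral_Icc hm,
    StieltjesFunction.integral_Icc_eq_integral_posPart_sub_quantile hm hM,
    (StieltjesFunction.isGreatest_image_mul_sub_integral_quantile hm hM z).csSup_eq]
end
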